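/- arXiv:1605.03081 — 5 statements merged into one kernel-verified Lean document; each statement's English description precedes it below -/
import Mathlib

section
/- Consider a parallel network with n edges and nondecreasing continuous cost functions c_i, and let B := min_i lim_{z→∞} c_i(z) be finite. Then the optimum cost satisfies Opt(Γ_M)/M → B as M → ∞, where Opt(Γ_M) = min{ Σᵢ xᵢ c_i(xᵢ) : xᵢ ≥ 0, Σᵢ xᵢ = M }. -/
open Filter Real Set

/-- The optimum cost of the parallel network game with inflow `M`. -/
noncomputable def OptCost (n : ℕ) (c : Fin n → ℝ → ℝ) (M : ℝ) : ℝ :=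
  sInf {C | ∃ x : Fin n → ℝ,
    (∀ i, 0 ≤ x i) ∧ (∑ i, x i) = M ∧ C = ∑ i, x i * c i (x i)}

/-
Routing all of the flow `M` over an edge `i₀` with `c i₀ → B` gives `Opt(Γ_M) ≤ M c_{i₀}(M)`,
so `limsup Opt(Γ_M)/M ≤ B`. Conversely, for `β < B` every cost exceeds `β` beyond some
threshold, so `x c_i(x) ≥ β x - K_i` for all `x ≥ 0`; summing over the edges gives
`Opt(Γ_M) ≥ β M - ∑ K_i`, hence `liminf Opt(Γ_M)/M ≥ β`.
-/

theorem exists_affine_le_mul_of_eventually_le {f : ℝ → ℝ} {β : ℝ}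
    (hnn : ∀ x, 0 ≤ x → 0 ≤ f x) (hf : ∀ᶠ x in atTop, β ≤ f x) :
    ∃ K, ∀ x, 0 ≤ x → β * x - K ≤ x * f x := by
  obtain ⟨Z, hZ⟩ := eventually_atTop.mp (hf.and (eventually_ge_atTop 0))
  refine ⟨Z * |β|, fun x hx => ?_⟩
  have hZ0 : 0 ≤ Z * |β| := mul_nonneg (hZ Z le_rfl).2 (abs_nonneg β)
  rcases le_or_gt Z x with hZx | hxZ
  · nlinarith [(hZ x hZx).1]
  · have : β * x ≤ |β| * x := mul_le_mul_of_nonneg_right (le_abs_self β) hx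
    nlinarith [abs_nonneg β, mul_nonneg hx (hnn x hx)]

section OptCost

variable {n : ℕ} {c : Fin n → ℝ → ℝ} {M : ℝ}

theorem optCost_le_mul (hnn : ∀ i, ∀ x, 0 ≤ x → 0 ≤ c i x) (i : Fin n) (hM : 0 ≤ M) :
    OptCost n c M ≤ M * c i M := by
  refine csInf_le ⟨0, ?_⟩ ⟨Pi.single i M, fun j => ?_, by simp, ?_⟩
  · rintro C ⟨x, hx, -, rfl⟩
    exact Finset.sum_nonneg fun j _ => mul_nonneg (hx j) (hnn j _ (hx j))
  · rcases eq_or_ne j i with rfl | hji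
    · simpa using hM
    · simp [hji]
  · rw [Finset.sum_eq_single i (fun j _ hji => by simp [hji]) (by simp)]
    simp

theorem affine_le_optCost [Nonempty (Fin n)] {β : ℝ} {K : Fin n → ℝ}
    (hK : ∀ i, ∀ x, 0 ≤ x → β * x - K i ≤ x * c i x) (hM : 0 ≤ M) :
    β * M - ∑ i, K i ≤ OptCost n c M := by
  let i₀ : Fin n := Classical.arbitrary _
  refine le_csInf ⟨_, Pi.single i₀ M, fun j => ?_, by simp, rfl⟩ ?_
  · rcases eq_or_ne j i₀ with rfl | hji
    · simpa using hM
    · simp [hji]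
  · rintro C ⟨x, hx, hxM, rfl⟩
    calc β * M - ∑ i, K i = ∑ i, (β * x i - K i) := by
          rw [Finset.sum_sub_distrib, ← Finset.mul_sum, hxM]
      _ ≤ ∑ i, x i * c i (x i) := Finset.sum_le_sum fun i _ => hK i (x i) (hx i)

end OptCost

theorem opt_div_tendsto_min_limit_general
    (n : ℕ) (c : Fin n → ℝ → ℝ)
    (hnn : ∀ i, ∀ x, 0 ≤ x → 0 ≤ c i x)
    (L : Fin n → EReal) (B : ℝ)
    (hL : ∀ i, Tendsto (fun x => ((c i x : EReal))) atTop (nhds (L i)))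
    (hB : IsLeast (Set.range L) (B : EReal)) :
    Tendsto (fun M => OptCost n c M / M) atTop (nhds B) := by
  obtain ⟨i₀, hi₀⟩ := hB.1
  have : Nonempty (Fin n) := ⟨i₀⟩
  refine tendsto_order.2 ⟨fun a ha => ?_, fun b hb => ?_⟩
  · obtain ⟨β, haβ, hβB⟩ := exists_between ha
    have hβ (i : Fin n) : ∀ᶠ x in atTop, β ≤ c i x := by
      have : (β : EReal) < L i := (EReal.coe_lt_coe_iff.2 hβB).trans_le (hB.2 ⟨i, rfl⟩)
      filter_upwards [(hL i).eventually_const_lt this] with x hx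
      exact_mod_cast hx.le
    choose K hK using fun i => exists_affine_le_mul_of_eventually_le (hnn i) (hβ i)
    have hlim : Tendsto (fun M => β - (∑ i, K i) / M) atTop (nhds β) := by
      simpa using (tendsto_const_nhds (x := β)).sub
        ((tendsto_const_nhds (x := ∑ i, K i)).div_atTop tendsto_id)
    filter_upwards [hlim.eventually_const_lt haβ, eventually_gt_atTop 0] with M haM hM
    refine haM.trans_le ?_
    rw [le_div_iff₀ hM, sub_mul, div_mul_cancel₀ _ hM.ne']
    linarith [affine_le_optCost hK hM.le]
  · have hc₀ : Tendsto (c i₀) atTop (nhds B) := EReal.tendsto_coe.mp (hi₀ ▸ hL i₀)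
    filter_upwards [hc₀.eventually_lt_const hb, eventually_gt_atTop 0] with M hcM hM
    rw [div_lt_iff₀ hM]
    linarith [optCost_le_mul hnn i₀ hM.le, mul_lt_mul_of_pos_left hcM hM]

/-- In a parallel network with `n` edges, nondecreasing continuous nonnegative cost functions
`c i` with limits `L i ∈ [0,∞]` at infinity, if `B = min_i L i` is finite, then
`Opt(Γ_M)/M → B` as `M → ∞`. -/
theorem opt_div_tendsto_min_limit
    (n : ℕ) (hn : 0 < n) (c : Fin n → ℝ → ℝ)
    (hmono : ∀ i, MonotoneOn (c i) (Ici 0))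
    (hcont : ∀ i, ContinuousOn (c i) (Ici 0))
    (hnn : ∀ i, ∀ x, 0 ≤ x → 0 ≤ c i x)
    (L : Fin n → EReal) (B : ℝ)
    (hL : ∀ i, Tendsto (fun x => ((c i x : EReal))) atTop (nhds (L i)))
    (hB : IsLeast (Set.range L) (B : EReal)) :
    Tendsto (fun M => OptCost n c M / M) atTop (nhds B) :=
  opt_div_tendsto_min_limit_general n c hnn L B hL hB
end

section
/- Fix a ≥ 2, k ∈ ℤ, j ≤ k − 1, and M with 2aᵏ < M ≤ 2a^{k+1}. Define C_j := min{ a^{j+1}·y + (M−y)² : y ∈ (aʲ, a^{j+1}], y ≤ M }. Then C_j = a^{2(j+1)} + (M − a^{j+1})² and C_{j−1} ≥ C_j. -/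
open Filter Real Set

/-- The restricted optimal cost `C_j` in the two-edge step-cost game. -/
noncomputable def Cj (a : ℝ) (j : ℤ) (M : ℝ) : ℝ :=
  sInf {C | ∃ y : ℝ, a ^ j < y ∧ y ≤ a ^ (j + 1) ∧ y ≤ M ∧
    C = a ^ (j + 1) * y + (M - y) ^ 2}

lemma Cj_eq_aux (a : ℝ) (ha : 2 ≤ a) (k j : ℤ) (hj : j ≤ k - 1) (M : ℝ)
    (hM₁ : 2 * a ^ k < M) :
    Cj a j M = a ^ (2 * (j + 1)) + (M - a ^ (j + 1)) ^ 2 := by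
  have ha0 : (0:ℝ) < a := by linarith
  have ha1 : (1:ℝ) < a := by linarith
  set b := a ^ (j + 1) with hb
  have hbk : b ≤ a ^ k := zpow_le_zpow_right₀ ha1.le (by omega)
  have hbpos : 0 < b := zpow_pos ha0 _
  have hjb : a ^ j < b := zpow_lt_zpow_right₀ ha1 (by omega)
  have hkpos : 0 < a ^ k := zpow_pos ha0 _
  have hbM : b < M := by nlinarith
  have hsq : a ^ (2 * (j + 1)) = b * b := by
    rw [two_mul, zpow_add₀ (ne_of_gt ha0)]
  have hmem : a ^ (2 * (j + 1)) + (M - b) ^ 2 ∈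
      {C | ∃ y : ℝ, a ^ j < y ∧ y ≤ a ^ (j + 1) ∧ y ≤ M ∧
        C = a ^ (j + 1) * y + (M - y) ^ 2} :=
    ⟨b, hjb, le_refl _, hbM.le, by rw [hsq]⟩
  have hlb : ∀ C ∈ {C | ∃ y : ℝ, a ^ j < y ∧ y ≤ a ^ (j + 1) ∧ y ≤ M ∧
      C = a ^ (j + 1) * y + (M - y) ^ 2},
      a ^ (2 * (j + 1)) + (M - b) ^ 2 ≤ C := by
    rintro C ⟨y, hy1, hy2, hy3, rfl⟩
    rw [hsq]
    nlinarith [mul_nonneg (sub_nonneg.2 hy2)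
      (by nlinarith : (0:ℝ) ≤ 2 * M - y - 2 * b)]
  exact le_antisymm (csInf_le ⟨_, hlb⟩ hmem) (le_csInf ⟨_, hmem⟩ hlb)

/-- Claim 1: for `j ≤ k - 1` and `M ∈ (2a^k, 2a^(k+1)]`,
`C_j = a^(2(j+1)) + (M - a^(j+1))²` and `C_{j-1} ≥ C_j`. -/
theorem Cj_closed_form_and_monotone
    (a : ℝ) (ha : 2 ≤ a) (k j : ℤ) (hj : j ≤ k - 1) (M : ℝ)
    (hM₁ : 2 * a ^ k < M) (hM₂ : M ≤ 2 * a ^ (k + 1)) :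
    Cj a j M = a ^ (2 * (j + 1)) + (M - a ^ (j + 1)) ^ 2 ∧
    Cj a (j - 1) M ≥ Cj a j M := by
  have h1 := Cj_eq_aux a ha k j hj M hM₁
  have h2 := Cj_eq_aux a ha k (j - 1) (by omega) M hM₁
  refine ⟨h1, ?_⟩
  rw [h1, h2]
  have ha0 : (0:ℝ) < a := by linarith
  have ha1 : (1:ℝ) < a := by linarith
  set u := a ^ j with hu
  have hupos : 0 < u := zpow_pos ha0 _
  have hj1 : a ^ (j + 1) = a * u := by rw [hu, zpow_add_one₀ (ne_of_gt ha0)]; ring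
  have hsq1 : a ^ (2 * (j + 1)) = (a * u) ^ 2 := by
    rw [two_mul, zpow_add₀ (ne_of_gt ha0), hj1]; ring
  have hsq2 : a ^ (2 * (j - 1 + 1)) = u ^ 2 := by
    rw [two_mul, zpow_add₀ (ne_of_gt ha0)]
    simp [hu, sq]
  have hbk : a ^ (j + 1) ≤ a ^ k := zpow_le_zpow_right₀ ha1.le (by omega)
  have hM : 2 * (a * u) < M := by rw [← hj1]; nlinarith [zpow_pos ha0 k]
  rw [hsq1, hsq2]
  have : j - 1 + 1 = j := by omega
  rw [this, ← hu, hj1]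
  nlinarith [mul_nonneg (mul_nonneg hupos.le (by linarith : (0:ℝ) ≤ a - 1))
    (by nlinarith : (0:ℝ) ≤ 2 * M - 2 * u * (a + 1))]
end

section
/- For a ≥ 2, k ∈ ℤ, and M with 2aᵏ < M ≤ 2a^{k+1}, the quantities C_{k+1} := a^{k+2}·a^{k+1} + (M − a^{k+1})² and C_{k−1} := a^{2k} + (M − aᵏ)² satisfy C_{k−1} ≤ C_{k+1}. -/
open Filter Real Set

/-- Claim 2: for `a ≥ 2`, `k ∈ ℤ` and `2a^k < M ≤ 2a^(k+1)`, the closed forms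
`C_{k+1} = a^(k+2)·a^(k+1) + (M - a^(k+1))²` and `C_{k-1} = a^(2k) + (M - a^k)²` satisfy
`C_{k-1} ≤ C_{k+1}`. -/
theorem Ckm1_le_Ckp1
    (a : ℝ) (ha : 2 ≤ a) (k : ℤ) (M : ℝ)
    (hM₁ : 2 * a ^ k < M) (hM₂ : M ≤ 2 * a ^ (k + 1)) :
    a ^ (2 * k) + (M - a ^ k) ^ 2 ≤ a ^ (k + 2) * a ^ (k + 1) + (M - a ^ (k + 1)) ^ 2 := by
  have ha0 : (0 : ℝ) < a := by linarith
  have hx : (0 : ℝ) < a ^ k := zpow_pos ha0 k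
  have h1 : a ^ (k + 1) = a ^ k * a := zpow_add_one₀ (ne_of_gt ha0) k
  have h2 : a ^ (k + 2) = a ^ k * a * a := by
    rw [show k + 2 = (k + 1) + 1 by ring, zpow_add_one₀ (ne_of_gt ha0), h1]
  have h3 : a ^ (2 * k) = a ^ k * a ^ k := by
    rw [two_mul, zpow_add₀ (ne_of_gt ha0)]
  rw [h1, h2, h3]
  rw [h1] at hM₂
  nlinarith [sq_nonneg (a - 1), sq_nonneg (a ^ k), mul_pos hx hx,
    mul_nonneg (mul_nonneg hx.le hx.le) (sq_nonneg (a - 1)),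
    mul_nonneg (mul_nonneg hx.le hx.le) (mul_nonneg (sub_nonneg.2 ha) (sq_nonneg (a-1)))]
end

section
/- For a ≥ 2 and z ∈ [1+a/2+√(a−1), 1+a], the function z ↦ (1+(z−1)²)/(a(z−a/4)) is increasing in z and attains the value (4+4a²)/(a(4+3a)) at z = 1+a; moreover at z = 1+a/2+√(a−1) its value equals 1. -/
open Filter Real Set

/-- For `a ≥ 2`, the function `z ↦ (1+(z-1)²)/(a(z-a/4))` is (strictly) increasing on
`[1+a/2+√(a-1), 1+a]`, equals `(4+4a²)/(a(4+3a))` at `z = 1+a`, and equals `1` at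
`z = 1+a/2+√(a-1)`. -/
theorem poa_increasing_segment
    (a : ℝ) (ha : 2 ≤ a) :
    StrictMonoOn (fun z => (1 + (z - 1) ^ 2) / (a * (z - a / 4)))
      (Icc (1 + a / 2 + Real.sqrt (a - 1)) (1 + a)) ∧
    (1 + ((1 + a) - 1) ^ 2) / (a * ((1 + a) - a / 4)) = (4 + 4 * a ^ 2) / (a * (4 + 3 * a)) ∧
    (1 + ((1 + a / 2 + Real.sqrt (a - 1)) - 1) ^ 2) /
      (a * ((1 + a / 2 + Real.sqrt (a - 1)) - a / 4)) = 1 := by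
  have ha0 : (0:ℝ) < a := by linarith
  set s := Real.sqrt (a - 1) with hsdef
  have hs2 : s ^ 2 = a - 1 := Real.sq_sqrt (by linarith)
  have hs1 : 1 ≤ s := by
    rw [show (1:ℝ) = Real.sqrt 1 by simp, hsdef]
    exact Real.sqrt_le_sqrt (by linarith)
  refine ⟨?_, ?_, ?_⟩
  · intro x hx y hy hxy
    obtain ⟨hx1, _⟩ := hx
    obtain ⟨hy1, _⟩ := hy
    have hxd : (0:ℝ) < x - a / 4 := by nlinarith
    have hyd : (0:ℝ) < y - a / 4 := by nlinarith
    simp only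
    rw [div_lt_div_iff₀ (by positivity) (by positivity)]
    have key : a ^ 2 / 16 - a / 2 + 2 < (x - a / 4) * (y - a / 4) := by
      nlinarith [mul_le_mul (show 1 + a / 4 + s ≤ x - a / 4 by linarith)
        (show 1 + a / 4 + s ≤ y - a / 4 by linarith) (by nlinarith) (le_of_lt hxd)]
    nlinarith [mul_pos (sub_pos.mpr hxy) (sub_pos.mpr key), ha0,
      mul_pos (mul_pos (sub_pos.mpr hxy) (sub_pos.mpr key)) ha0]
  · rw [div_eq_div_iff (by nlinarith) (by nlinarith)]
    ring
  · have hd : (0:ℝ) < a * ((1 + a / 2 + s) - a / 4) := by nlinarith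
    rw [div_eq_one_iff_eq (ne_of_gt hd)]
    linear_combination hs2
end

section
/- There exists a nonatomic congestion game on a two-edge parallel network with strictly increasing convex cost functions on both edges such that limsup_{M→∞} PoA(Γ_M) > 1. Concretely, with c₁(x) = x² and c₂ the piecewise-linear interpolation of x² at the points aᵏ (k ∈ ℤ) with a = 2, at the inflows M_k = a^{k−1}(a + b) with b = √((2a²+a)/3), the price of anarchy equals (c³ + (a+1)d² − ad)/(b³ + a³) ≈ 1.0059, where c = (√((a+1)² + 4a² + 4(a+1)b) − (a+1))/2 and d = a + b − c. -/
open Filter Real Set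

/-- Worst equilibrium cost of the two-edge parallel game with costs `c₁, c₂` and inflow `M`. -/
noncomputable def WEq2 (c₁ c₂ : ℝ → ℝ) (M : ℝ) : ℝ :=
  sSup {C | ∃ x y : ℝ, 0 ≤ x ∧ 0 ≤ y ∧ x + y = M ∧
    (0 < x → c₁ x ≤ c₂ y) ∧ (0 < y → c₂ y ≤ c₁ x) ∧
    C = x * c₁ x + y * c₂ y}

/-- Optimum cost of the two-edge parallel game with costs `c₁, c₂` and inflow `M`. -/
noncomputable def Opt2 (c₁ c₂ : ℝ → ℝ) (M : ℝ) : ℝ :=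
  sInf {C | ∃ x y : ℝ, 0 ≤ x ∧ 0 ≤ y ∧ x + y = M ∧ C = x * c₁ x + y * c₂ y}

/-- Price of anarchy of the two-edge parallel game. -/
noncomputable def PoA2 (c₁ c₂ : ℝ → ℝ) (M : ℝ) : ℝ :=
  WEq2 c₁ c₂ M / Opt2 c₁ c₂ M

/-- The piecewise-linear interpolation of `x²` at the points `2^k`, `k ∈ ℤ`:
`interp y = (2^(k-1) + 2^k) y - 2^(k-1) 2^k` for `y ∈ [2^(k-1), 2^k]`, and `0` for `y ≤ 0`. -/
noncomputable def interp (y : ℝ) : ℝ :=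
  if y ≤ 0 then 0
  else ((2:ℝ) ^ (⌈Real.logb 2 y⌉ - 1) + 2 ^ ⌈Real.logb 2 y⌉) * y -
    2 ^ (⌈Real.logb 2 y⌉ - 1) * 2 ^ ⌈Real.logb 2 y⌉

/-!
Both `x ↦ x²` and `interp` scale by `4^j` under `x ↦ 2^j x`, so the game at inflow
`2^j (2 + b)` is the game at `2 + b` with all costs multiplied by `8^j`. There the unique
equilibrium is the split `(c, 2 + b - c)` with equal costs, while a common supporting line of
`x ↦ x³` and `y ↦ y * interp y` certifies that the split `(b, 2)` is optimal. The ratio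
`c²(2 + b)/(b³ + 8) > 1` of the two costs therefore recurs along `M_k → ∞`, and as the price of
anarchy is bounded (by `8`, since `x² ≤ interp x ≤ 2x²`), the limsup is at least that ratio.
-/

theorem interp_zero : interp 0 = 0 := if_pos le_rfl

theorem interp_eq_of_mem_Ioc {j : ℤ} {y : ℝ} (hy : y ∈ Ioc ((2 : ℝ) ^ j) (2 ^ (j + 1))) :
    interp y = 3 * 2 ^ j * y - 2 * (2 ^ j) ^ 2 := by
  have hy₀ : 0 < y := (zpow_pos two_pos j).trans hy.1
  have hceil : ⌈logb 2 y⌉ = j + 1 := by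
    rw [Int.ceil_eq_iff, Int.cast_add, Int.cast_one, add_sub_cancel_right,
      lt_logb_iff_rpow_lt one_lt_two hy₀, logb_le_iff_le_rpow one_lt_two hy₀]
    exact_mod_cast hy
  rw [interp, if_neg hy₀.not_ge, hceil, add_sub_cancel_right, zpow_add_one₀ two_ne_zero]
  ring

theorem line_le_interp (j : ℤ) {y : ℝ} (hy : 0 ≤ y) :
    3 * 2 ^ j * y - 2 * ((2 : ℝ) ^ j) ^ 2 ≤ interp y := by
  have hs := zpow_pos (two_pos (α := ℝ)) j
  rcases hy.eq_or_lt with rfl | hy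
  · rw [interp_zero]; nlinarith
  obtain ⟨i, hi⟩ := exists_mem_Ioc_zpow hy one_lt_two
  have hr := zpow_pos (two_pos (α := ℝ)) i
  rw [interp_eq_of_mem_Ioc hi]
  rw [zpow_add_one₀ two_ne_zero] at hi
  -- the breakpoints are powers of 2: two of them are equal or at least a factor 2 apart
  rcases lt_trichotomy i j with hij | rfl | hji
  · have : 2 ^ i * 2 ≤ (2 : ℝ) ^ j := by
      rw [← zpow_add_one₀ two_ne_zero]; exact zpow_le_zpow_right₀ one_le_two hij
    nlinarith [hi.1, hi.2]
  · exact le_rfl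
  · have : 2 ^ j * 2 ≤ (2 : ℝ) ^ i := by
      rw [← zpow_add_one₀ two_ne_zero]; exact zpow_le_zpow_right₀ one_le_two hji
    nlinarith [hi.1, hi.2]

theorem sq_le_interp {y : ℝ} (hy : 0 ≤ y) : y ^ 2 ≤ interp y := by
  rcases hy.eq_or_lt with rfl | hy
  · simp [interp_zero]
  obtain ⟨j, hj⟩ := exists_mem_Ioc_zpow hy one_lt_two
  rw [interp_eq_of_mem_Ioc hj]
  rw [zpow_add_one₀ two_ne_zero] at hj
  nlinarith [hj.1, hj.2]

theorem interp_le_two_mul_sq {y : ℝ} (hy : 0 ≤ y) : interp y ≤ 2 * y ^ 2 := by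
  rcases hy.eq_or_lt with rfl | hy
  · simp [interp_zero]
  obtain ⟨j, hj⟩ := exists_mem_Ioc_zpow hy one_lt_two
  rw [interp_eq_of_mem_Ioc hj]
  nlinarith [sq_nonneg (4 * y - 3 * 2 ^ j), zpow_pos (two_pos (α := ℝ)) j]

theorem interp_strictMonoOn : StrictMonoOn interp (Ici 0) := by
  intro x hx y hy hxy
  rcases (mem_Ici.mp hx).eq_or_lt with rfl | hx
  · rw [interp_zero]; exact (pow_pos hxy 2).trans_le (sq_le_interp hy)
  obtain ⟨j, hj⟩ := exists_mem_Ioc_zpow hx one_lt_two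
  rw [interp_eq_of_mem_Ioc hj]
  refine lt_of_lt_of_le ?_ (line_le_interp j hy)
  nlinarith [zpow_pos (two_pos (α := ℝ)) j]

theorem interp_convexOn : ConvexOn ℝ (Ici 0) interp := by
  refine ⟨convex_Ici 0, fun x hx y hy a b ha hb hab => ?_⟩
  rw [mem_Ici] at hx hy
  simp only [smul_eq_mul]
  have hz : 0 ≤ a * x + b * y := by positivity
  rcases hz.eq_or_lt with hz | hz
  · rw [← hz, interp_zero]
    have := (sq_nonneg x).trans (sq_le_interp hx)
    have := (sq_nonneg y).trans (sq_le_interp hy)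
    positivity
  -- interp is affine on the dyadic interval containing a x + b y, and lies above that line
  obtain ⟨j, hj⟩ := exists_mem_Ioc_zpow hz one_lt_two
  rw [interp_eq_of_mem_Ioc hj]
  nlinarith [mul_le_mul_of_nonneg_left (line_le_interp j hx) ha,
    mul_le_mul_of_nonneg_left (line_le_interp j hy) hb]

theorem interp_zpow_mul {y : ℝ} (hy : y ∈ Ioc 1 2) (j : ℤ) :
    interp (2 ^ j * y) = (2 ^ j) ^ 2 * (3 * y - 2) := by
  have ht := zpow_pos (two_pos (α := ℝ)) j
  rw [interp_eq_of_mem_Ioc (j := j) ⟨by nlinarith [hy.1], ?_⟩]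
  · ring
  · rw [zpow_add_one₀ two_ne_zero]; nlinarith [hy.2]

section TwoEdge

variable {c₁ c₂ : ℝ → ℝ} {M x₀ y₀ : ℝ}

/-- A split with equal costs is the only equilibrium: with strictly increasing costs, moving flow
onto an edge makes it strictly costlier than the other one. -/
theorem WEq2_eq_of_cost_eq (h₁ : StrictMonoOn c₁ (Ici 0)) (h₂ : StrictMonoOn c₂ (Ici 0))
    (hx₀ : 0 ≤ x₀) (hy₀ : 0 ≤ y₀) (hM : x₀ + y₀ = M) (hc : c₁ x₀ = c₂ y₀) :
    WEq2 c₁ c₂ M = x₀ * c₁ x₀ + y₀ * c₂ y₀ := by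
  refine IsGreatest.csSup_eq
    ⟨⟨x₀, y₀, hx₀, hy₀, hM, fun _ => hc.le, fun _ => hc.ge, rfl⟩, ?_⟩
  rintro C ⟨x, y, hx, hy, hxy, hx_eq, hy_eq, rfl⟩
  obtain rfl : x = x₀ := by
    rcases lt_trichotomy x x₀ with hlt | heq | hgt
    · have hyy : y₀ < y := by linarith
      have := hy_eq (hy₀.trans_lt hyy)
      have := h₁ hx hx₀ hlt
      have := h₂ hy₀ hy hyy
      linarith
    · exact heq
    · have hyy : y < y₀ := by linarith
      have := hx_eq (hx₀.trans_lt hgt)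
      have := h₁ hx₀ hx hgt
      have := h₂ hy hy₀ hyy
      linarith
  obtain rfl : y = y₀ := by linarith
  exact le_rfl

/-- `lam` is a Lagrange multiplier for the constraint `x + y = M`. -/
theorem Opt2_eq_of_supporting (lam : ℝ) (hx₀ : 0 ≤ x₀) (hy₀ : 0 ≤ y₀) (hM : x₀ + y₀ = M)
    (h₁ : ∀ x, 0 ≤ x → x₀ * c₁ x₀ + lam * (x - x₀) ≤ x * c₁ x)
    (h₂ : ∀ y, 0 ≤ y → y₀ * c₂ y₀ + lam * (y - y₀) ≤ y * c₂ y) :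
    Opt2 c₁ c₂ M = x₀ * c₁ x₀ + y₀ * c₂ y₀ := by
  refine IsLeast.csInf_eq ⟨⟨x₀, y₀, hx₀, hy₀, hM, rfl⟩, ?_⟩
  rintro C ⟨x, y, hx, hy, hxy, rfl⟩
  have hbal : lam * (x - x₀) + lam * (y - y₀) = 0 := by linear_combination lam * (hxy - hM)
  linarith [h₁ x hx, h₂ y hy]

theorem WEq2_le {B : ℝ} (hB : 0 ≤ B)
    (h : ∀ x y, 0 ≤ x → 0 ≤ y → x + y = M → x * c₁ x + y * c₂ y ≤ B) : WEq2 c₁ c₂ M ≤ B :=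
  Real.sSup_le (fun _ ⟨x, y, hx, hy, hxy, _, _, hC⟩ => hC ▸ h x y hx hy hxy) hB

theorem le_Opt2 {B : ℝ} (hM : 0 ≤ M)
    (h : ∀ x y, 0 ≤ x → 0 ≤ y → x + y = M → B ≤ x * c₁ x + y * c₂ y) : B ≤ Opt2 c₁ c₂ M :=
  le_csInf ⟨_, M, 0, hM, le_rfl, add_zero M, rfl⟩
    (fun _ ⟨x, y, hx, hy, hxy, hC⟩ => hC ▸ h x y hx hy hxy)

end TwoEdge

section Parameters

variable {b c : ℝ}

/- `b` is chosen with `3b² = 10`, the left derivative of `y * interp y` at the breakpoint `2`, so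
that the split `(b, 2)` of the inflow `2 + b` is optimal; `c` is the equilibrium flow on the first
edge, `c² = interp (2 + b - c)`. -/

theorem WEq2_sq_interp (hb₀ : 0 < b) (hb : 3 * b ^ 2 = 10) (hc₀ : 0 < c)
    (hc : c ^ 2 = 3 * (2 + b - c) - 2) (j : ℤ) :
    WEq2 (fun x => x ^ 2) interp (2 ^ j * (2 + b)) = (2 ^ j) ^ 3 * (c ^ 2 * (2 + b)) := by
  have ht := zpow_pos (two_pos (α := ℝ)) j
  have hd : 2 + b - c ∈ Ioc 1 2 := ⟨by nlinarith, by nlinarith⟩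
  rw [WEq2_eq_of_cost_eq (x₀ := 2 ^ j * c) (y₀ := 2 ^ j * (2 + b - c))
    (pow_left_strictMonoOn₀ two_ne_zero) interp_strictMonoOn (by positivity)
    (by nlinarith [hd.1]) (by ring) (by rw [interp_zpow_mul hd, ← hc]; ring),
    interp_zpow_mul hd, ← hc]
  ring

theorem Opt2_sq_interp (hb₀ : 0 ≤ b) (hb : 3 * b ^ 2 = 10) (j : ℤ) :
    Opt2 (fun x => x ^ 2) interp (2 ^ j * (2 + b)) = (2 ^ j) ^ 3 * (b ^ 3 + 8) := by
  have ht := zpow_pos (two_pos (α := ℝ)) j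
  have h₂ : interp (2 ^ j * 2) = (2 ^ j) ^ 2 * 4 := by
    rw [interp_zpow_mul ⟨one_lt_two, le_rfl⟩]; ring
  rw [Opt2_eq_of_supporting (10 * (2 ^ j) ^ 2) (x₀ := 2 ^ j * b) (y₀ := 2 ^ j * 2)
    (by positivity) (by positivity) (by ring) (fun x hx => ?_) (fun y hy => ?_), h₂]
  · ring
  · have h10 : 10 * (2 ^ j) ^ 2 = 3 * (2 ^ j * b) ^ 2 := by rw [← hb]; ring
    rw [h10]
    nlinarith [mul_nonneg (sq_nonneg (x - 2 ^ j * b)) (by positivity : 0 ≤ x + 2 * (2 ^ j * b))]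
  · rw [h₂]
    nlinarith [mul_le_mul_of_nonneg_left (line_le_interp j hy) hy,
      mul_nonneg ht.le (sq_nonneg (y - 2 * 2 ^ j))]

theorem PoA2_sq_interp (hb₀ : 0 < b) (hb : 3 * b ^ 2 = 10) (hc₀ : 0 < c)
    (hc : c ^ 2 = 3 * (2 + b - c) - 2) (j : ℤ) :
    PoA2 (fun x => x ^ 2) interp (2 ^ j * (2 + b)) = c ^ 2 * (2 + b) / (b ^ 3 + 8) := by
  rw [PoA2, WEq2_sq_interp hb₀ hb hc₀ hc, Opt2_sq_interp hb₀.le hb]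
  exact mul_div_mul_left _ _ (by positivity)

theorem cube_add_eight_lt_sq_mul (hb₀ : 0 < b) (hb : 3 * b ^ 2 = 10)
    (hc : c ^ 2 = 3 * (2 + b - c) - 2) : b ^ 3 + 8 < c ^ 2 * (2 + b) := by
  -- dividing by `2 + b` and using `hc`, the claim is `c < 5b/3 - 10/9`; as `c ↦ c² + 3c` is
  -- increasing, this reduces to `b < 128/69`
  have hb' : b < 128 / 69 := by nlinarith
  have hcb : c < 5 * b / 3 - 10 / 9 := by nlinarith
  nlinarith

theorem params_of_sqrt (hb : b = √(10 / 3)) (hc : c = (√(25 + 12 * b) - 3) / 2) :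
    0 < b ∧ 3 * b ^ 2 = 10 ∧ 0 < c ∧ c ^ 2 = 3 * (2 + b - c) - 2 := by
  have hb₀ : 0 < b := hb ▸ Real.sqrt_pos.mpr (by norm_num)
  have hs := Real.sq_sqrt (by positivity : (0 : ℝ) ≤ 25 + 12 * b)
  have hs₀ := Real.sqrt_nonneg (25 + 12 * b)
  refine ⟨hb₀, by rw [hb, Real.sq_sqrt (by norm_num)]; norm_num, ?_, ?_⟩
  · rw [hc]; nlinarith
  · rw [hc]; linear_combination hs / 4

end Parameters

theorem PoA2_sq_interp_le {M : ℝ} (hM : 0 < M) : PoA2 (fun x => x ^ 2) interp M ≤ 8 := by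
  have hW : WEq2 (fun x => x ^ 2) interp M ≤ 2 * M ^ 3 := by
    refine WEq2_le (by positivity) fun x y hx hy hxy => ?_
    subst hxy
    nlinarith [mul_le_mul_of_nonneg_left (interp_le_two_mul_sq hy) hy, mul_nonneg hx hy,
      mul_nonneg (mul_nonneg hx hy) hy, mul_nonneg (mul_nonneg hx hy) hx]
  have hO : M ^ 3 / 4 ≤ Opt2 (fun x => x ^ 2) interp M := by
    refine le_Opt2 hM.le fun x y hx hy hxy => ?_
    subst hxy
    nlinarith [mul_le_mul_of_nonneg_left (sq_le_interp hy) hy,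
      mul_nonneg (add_nonneg hx hy) (sq_nonneg (x - y))]
  calc PoA2 (fun x => x ^ 2) interp M ≤ 2 * M ^ 3 / (M ^ 3 / 4) :=
        div_le_div₀ (by positivity) hW (by positivity) hO
    _ = 8 := by field_simp; norm_num

theorem one_lt_limsup_PoA2_sq_interp :
    1 < limsup (fun M => PoA2 (fun x => x ^ 2) interp M) atTop := by
  obtain ⟨hb₀, hb, hc₀, hc⟩ := params_of_sqrt rfl rfl
  set b := √(10 / 3)
  set c := (√(25 + 12 * b) - 3) / 2
  have hbdd : IsBoundedUnder (· ≤ ·) atTop fun M => PoA2 (fun x => x ^ 2) interp M :=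
    ⟨8, eventually_map.mpr (eventually_gt_atTop 0 |>.mono fun M hM => PoA2_sq_interp_le hM)⟩
  have hfreq : ∃ᶠ M in atTop, c ^ 2 * (2 + b) / (b ^ 3 + 8) ≤ PoA2 (fun x => x ^ 2) interp M := by
    refine frequently_atTop.mpr fun a => ?_
    obtain ⟨n, hn⟩ := pow_unbounded_of_one_lt a one_lt_two
    refine ⟨2 ^ (n : ℤ) * (2 + b), ?_, (PoA2_sq_interp hb₀ hb hc₀ hc n).ge⟩
    rw [zpow_natCast]
    nlinarith [pow_pos (two_pos (α := ℝ)) n]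
  refine lt_of_lt_of_le ?_ (le_limsup_of_frequently_le hfreq hbdd)
  rw [one_lt_div (by positivity)]
  exact cube_add_eight_lt_sq_mul hb₀ hb hc

/-- Theorem 4.3: there is a two-edge game with strictly increasing convex costs whose price of
anarchy has `limsup_{M→∞} PoA(Γ_M) > 1`; concretely `c₁(x) = x²` and `c₂` the piecewise-linear
interpolation of `x²` at the points `2^k`, for which at the inflows `M_k = 2^(k-1)(2+b)` with
`b = √(10/3)` the price of anarchy equals `(c³ + 3d² - 2d)/(b³ + 8)`, where
`c = (√(25 + 12b) - 3)/2` and `d = 2 + b - c`. -/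
theorem exists_convex_costs_limsup_poa_gt_one :
    ∃ c₁ c₂ : ℝ → ℝ,
      StrictMonoOn c₁ (Ici 0) ∧ StrictMonoOn c₂ (Ici 0) ∧
      ConvexOn ℝ (Ici 0) c₁ ∧ ConvexOn ℝ (Ici 0) c₂ ∧
      1 < Filter.limsup (fun M => PoA2 c₁ c₂ M) atTop ∧
      c₁ = (fun x => x ^ 2) ∧ c₂ = interp ∧
      ∀ b c d : ℝ, b = Real.sqrt (10 / 3) →
        c = (Real.sqrt ((2 + 1) ^ 2 + 4 * 2 ^ 2 + 4 * (2 + 1) * b) - (2 + 1)) / 2 →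
        d = 2 + b - c →
        ∀ k : ℤ, PoA2 c₁ c₂ ((2:ℝ) ^ (k - 1) * (2 + b)) =
          (c ^ 3 + (2 + 1) * d ^ 2 - 2 * d) / (b ^ 3 + 2 ^ 3) := by
  refine ⟨_, _, pow_left_strictMonoOn₀ two_ne_zero, interp_strictMonoOn, convexOn_pow 2,
    interp_convexOn, one_lt_limsup_PoA2_sq_interp, rfl, rfl, ?_⟩
  rintro b c d hb hc rfl k
  obtain ⟨hb₀, hb, hc₀, hc⟩ := params_of_sqrt hb (hc.trans (by norm_num))
  rw [PoA2_sq_interp hb₀ hb hc₀ hc]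
  congr 1
  · linear_combination (2 + b - c) * hc
  · norm_num
end
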